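/- Let X_1, …, X_m be independent Bernoulli random variables with parameters p_1, …, p_m ∈ [0,1], let p̄ = (1/m)·Σ_{j=1}^m p_j, and set Z = Σ_{j=1}^m (X_j − p_j)·log p̄ (with the convention 0·log 0 = 0). Then for every real λ with |λ| < 1, E[ e^{λZ} ] ≤ exp( m·λ² / (2(1−|λ|)) ). -/

import Mathlib

open Real

lemma sq_le_exp' {s : ℝ} (hs : 0 ≤ s) : s^2 ≤ Real.exp s := by
  have h1 : s ≤ Real.exp (s/2) := by
    have := Real.sum_le_exp_of_nonneg (by linarith : (0:ℝ) ≤ s/2) 3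
    simp [Finset.sum_range_succ] at this
    nlinarith [sq_nonneg (s - 4)]
  calc s^2 ≤ Real.exp (s/2) * Real.exp (s/2) := by nlinarith [Real.exp_pos (s/2)]
    _ = Real.exp s := by rw [← Real.exp_add]; ring_nf

lemma exp_le_quad {x : ℝ} (hx : x ≤ 0) : Real.exp x ≤ 1 + x + x^2/2 := by
  have h1 : 1 + (-x) + (-x)^2/2 ≤ Real.exp (-x) := by
    have := Real.sum_le_exp_of_nonneg (by linarith : (0:ℝ) ≤ -x) 3
    simp [Finset.sum_range_succ] at this
    nlinarith
  have h2 : (1 + x + x^2/2) * (1 - x + x^2/2) = 1 + x^4/4 := by ring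
  have h3 : Real.exp x * Real.exp (-x) = 1 := by rw [← Real.exp_add]; simp
  nlinarith [Real.exp_pos x, Real.exp_pos (-x), sq_nonneg x, pow_le_pow_left₀ (by linarith : (0:ℝ) ≤ 1) (le_refl (1:ℝ)) 4]

lemma poly_le_half_exp (k : ℕ) {y : ℝ} (hy : 0 ≤ y) :
    y^(k+2) / (Nat.factorial (k+2)) ≤ Real.exp y / 2 := by
  have h := Real.sum_le_exp_of_nonneg hy (k+4)
  rw [Finset.sum_range_succ, Finset.sum_range_succ, Finset.sum_range_succ] at h
  have hnn : (0:ℝ) ≤ ∑ i ∈ Finset.range (k+1), y^i / i.factorial := by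
    positivity
  -- key: y^(k+2)/(k+2)! ≤ y^(k+1)/(k+1)! + y^(k+3)/(k+3)!
  have hfact2 : ((k+2).factorial : ℝ) = (k+2) * (k+1).factorial := by
    push_cast [Nat.factorial_succ]; ring
  have hfact3 : ((k+3).factorial : ℝ) = (k+3) * (k+2) * (k+1).factorial := by
    push_cast [Nat.factorial_succ]; ring
  have hfpos : (0:ℝ) < (k+1).factorial := by positivity
  have ha : (0:ℝ) ≤ y^(k+1) := by positivity
  have key : y^(k+2) / (Nat.factorial (k+2)) ≤
      y^(k+1)/(k+1).factorial + y^(k+3)/(k+3).factorial := by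
    rw [hfact2, hfact3]
    rw [div_add_div _ _ (by positivity) (by positivity), div_le_div_iff₀ (by positivity) (by positivity)]
    have hk : (0:ℝ) ≤ (k:ℝ) := Nat.cast_nonneg k
    have e1 : y^(k+2) = y * y^(k+1) := by ring
    have e2 : y^(k+3) = y^2 * y^(k+1) := by ring
    rw [e1, e2]
    have hscalar : y*((k:ℝ)+3) ≤ ((k:ℝ)+3)*((k:ℝ)+2) + y^2 := by
      nlinarith [sq_nonneg (y - ((k:ℝ)+3))]
    have hc : (0:ℝ) ≤ y^(k+1) * ((k+1).factorial * (k+1).factorial) * ((k:ℝ)+2) := by positivity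
    nlinarith [mul_le_mul_of_nonneg_left hscalar hc]
  have : y^(k+1)/(k+1).factorial + y^(k+2)/(k+2).factorial + y^(k+3)/(k+3).factorial ≤ Real.exp y := by
    push_cast at h ⊢
    linarith
  push_cast at key this ⊢
  linarith

lemma exp_sub_eq_tsum (x : ℝ) :
    Real.exp x - 1 - x = ∑' k : ℕ, x^(k+2) / ((k+2).factorial : ℝ) := by
  have hsum := Real.summable_pow_div_factorial x
  have hexp : Real.exp x = ∑' n : ℕ, x^n / (n.factorial : ℝ) := by
    rw [Real.exp_eq_exp_ℝ, NormedSpace.exp_eq_tsum_div]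
  rw [hexp, Summable.tsum_eq_zero_add hsum, Summable.tsum_eq_zero_add ((summable_nat_add_iff 1).mpr hsum)]
  simp [Nat.factorial]
 
lemma core_bound {r s : ℝ} (hr0 : 0 ≤ r) (hr1 : r < 1) (hs : 0 ≤ s) :
    Real.exp (-s) * (Real.exp (r*s) - 1 - r*s) ≤ r^2 / (2*(1-r)) := by
  rw [exp_sub_eq_tsum, ← tsum_mul_left]
  have hsumL : Summable (fun k : ℕ => Real.exp (-s) * ((r*s)^(k+2) / ((k+2).factorial : ℝ))) :=
    (((summable_nat_add_iff 2).mpr (Real.summable_pow_div_factorial (r*s)))).mul_left _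
  have hsumR : Summable (fun k : ℕ => r^2/2 * r^k) :=
    (summable_geometric_of_lt_one hr0 hr1).mul_left _
  have hle : ∀ k : ℕ, Real.exp (-s) * ((r*s)^(k+2) / ((k+2).factorial : ℝ)) ≤ r^2/2 * r^k := by
    intro k
    have h1 : (r*s)^(k+2) = r^(k+2) * s^(k+2) := by ring
    have h2 := poly_le_half_exp k hs
    have h3 : Real.exp (-s) * (s^(k+2) / ((k+2).factorial : ℝ)) ≤ 1/2 := by
      rw [Real.exp_neg]
      rw [inv_mul_le_iff₀ (Real.exp_pos s)]
      linarith
    have hrp : (0:ℝ) ≤ r^(k+2) := by positivity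
    calc Real.exp (-s) * ((r*s)^(k+2) / ((k+2).factorial : ℝ))
        = r^(k+2) * (Real.exp (-s) * (s^(k+2) / ((k+2).factorial : ℝ))) := by rw [h1]; ring
      _ ≤ r^(k+2) * (1/2) := by
          exact mul_le_mul_of_nonneg_left h3 hrp
      _ = r^2/2 * r^k := by ring
  calc (∑' k : ℕ, Real.exp (-s) * ((r*s)^(k+2) / ((k+2).factorial : ℝ)))
      ≤ ∑' k : ℕ, r^2/2 * r^k := Summable.tsum_le_tsum hle hsumL hsumR
    _ = r^2/2 * (1-r)⁻¹ := by rw [tsum_mul_left, tsum_geometric_of_lt_one hr0 hr1]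
    _ = r^2 / (2*(1-r)) := by
        field_simp

lemma pointwise_bound {lam s : ℝ} (hlam : |lam| < 1) (hs : 0 ≤ s) :
    Real.exp (-s) * (Real.exp (-(lam*s)) - 1 + lam*s) ≤ lam^2 / (2*(1-|lam|)) := by
  rcases le_or_gt 0 lam with h0 | h0
  · -- lam ≥ 0 : x = -lam*s ≤ 0
    have hx : -(lam*s) ≤ 0 := by nlinarith
    have h1 : Real.exp (-(lam*s)) - 1 + lam*s ≤ (lam*s)^2/2 := by
      have := exp_le_quad hx
      nlinarith
    have h2 : Real.exp (-s) * (s^2) ≤ 1 := by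
      rw [Real.exp_neg, inv_mul_le_iff₀ (Real.exp_pos s)]
      simpa using sq_le_exp' hs
    have hden : (0:ℝ) < 1 - |lam| := by linarith
    have h3 : Real.exp (-s) * (Real.exp (-(lam*s)) - 1 + lam*s) ≤ lam^2/2 := by
      calc Real.exp (-s) * (Real.exp (-(lam*s)) - 1 + lam*s)
          ≤ Real.exp (-s) * ((lam*s)^2/2) :=
            mul_le_mul_of_nonneg_left h1 (Real.exp_pos _).le
        _ = lam^2/2 * (Real.exp (-s) * s^2) := by ring
        _ ≤ lam^2/2 * 1 := mul_le_mul_of_nonneg_left h2 (by positivity)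
        _ = lam^2/2 := by ring
    have h4 : lam^2/2 ≤ lam^2 / (2*(1-|lam|)) := by
      apply div_le_div_of_nonneg_left (by positivity) (by linarith)
      nlinarith [abs_nonneg lam]
    linarith
  · -- lam < 0 : r = |lam| = -lam, -(lam*s) = r*s
    have hr : |lam| = -lam := abs_of_neg h0
    have hr1 : -lam < 1 := by rw [← hr]; exact hlam
    have hr0 : (0:ℝ) ≤ -lam := by linarith
    have : Real.exp (-s) * (Real.exp ((-lam)*s) - 1 - (-lam)*s) ≤ (-lam)^2 / (2*(1-(-lam))) :=
      core_bound hr0 hr1 hs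
    rw [show lam^2 = (-lam)^2 by ring, hr]
    calc Real.exp (-s) * (Real.exp (-(lam*s)) - 1 + lam*s)
        = Real.exp (-s) * (Real.exp ((-lam)*s) - 1 - (-lam)*s) := by ring_nf
      _ ≤ (-lam)^2 / (2*(1-(-lam))) := this

open MeasureTheory ProbabilityTheory

lemma bernoulli_exp_integral {Ω : Type*} [MeasurableSpace Ω] (μ : Measure Ω)
    [IsProbabilityMeasure μ] (X : Ω → ℝ) (p t : ℝ) (hp : p ∈ Set.Icc (0:ℝ) 1)
    (hmeas : Measurable X) (hval : ∀ ω, X ω = 0 ∨ X ω = 1)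
    (hdist : μ {ω | X ω = 1} = ENNReal.ofReal p) :
    ∫ ω, Real.exp (t * (X ω - p)) ∂μ = Real.exp (-(t*p)) * (1 + p * (Real.exp t - 1)) := by
  have hS : MeasurableSet {ω | X ω = 1} := hmeas (measurableSet_singleton 1)
  have hXind : X = Set.indicator {ω | X ω = 1} (fun _ => (1:ℝ)) := by
    ext ω; rcases hval ω with h | h <;> simp [Set.indicator, h]
  have hXint : Integrable X μ := by
    rw [hXind]; exact (integrable_const (1:ℝ)).indicator hS
  have hEX : ∫ ω, X ω ∂μ = p := by
    rw [hXind, MeasureTheory.integral_indicator_const _ hS, measureReal_def, hdist,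
      ENNReal.toReal_ofReal hp.1]
    simp
  have hrep : ∀ ω, Real.exp (t * (X ω - p))
      = Real.exp (-(t*p)) + (Real.exp (-(t*p)) * (Real.exp t - 1)) * X ω := by
    intro ω; rcases hval ω with h | h <;> rw [h]
    · simp
    · rw [mul_one, show t * (1 - p) = -(t*p) + t by ring, Real.exp_add]
      ring
  calc ∫ ω, Real.exp (t * (X ω - p)) ∂μ
      = ∫ ω, (Real.exp (-(t*p)) + (Real.exp (-(t*p)) * (Real.exp t - 1)) * X ω) ∂μ := by
        exact integral_congr_ae (Filter.Eventually.of_forall hrep)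
    _ = Real.exp (-(t*p)) + (Real.exp (-(t*p)) * (Real.exp t - 1)) * p := by
        rw [integral_add (integrable_const _) (hXint.const_mul _),
          integral_const, MeasureTheory.integral_const_mul, hEX]
        simp
    _ = Real.exp (-(t*p)) * (1 + p * (Real.exp t - 1)) := by ring

lemma final_ineq (m : ℕ) (S lam : ℝ) (hS0 : 0 ≤ S) (hSm : S ≤ m) (hlam : |lam| < 1) :
    S * (Real.exp (lam * Real.log (S/m)) - 1 - lam * Real.log (S/m))
      ≤ (m:ℝ) * lam^2 / (2*(1-|lam|)) := by
  have hden : (0:ℝ) < 1 - |lam| := by linarith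
  rcases eq_or_lt_of_le hS0 with h0 | h0
  · rw [← h0]
    have : (0:ℝ) ≤ (m:ℝ) * lam^2 / (2*(1-|lam|)) := by positivity
    simpa using this
  · have hm : (0:ℝ) < m := lt_of_lt_of_le h0 hSm
    set q : ℝ := S / m with hq
    have hq0 : 0 < q := div_pos h0 hm
    have hq1 : q ≤ 1 := by rw [hq, div_le_one hm]; exact hSm
    set s : ℝ := -Real.log q with hsdef
    have hs0 : 0 ≤ s := by
      rw [hsdef]; simp; exact Real.log_nonpos hq0.le hq1
    have hqs : q = Real.exp (-s) := by
      rw [hsdef, neg_neg, Real.exp_log hq0]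
    have hlog : lam * Real.log q = -(lam * s) := by rw [hsdef]; ring
    have hSq : S = (m:ℝ) * q := by rw [hq]; field_simp
    have hpb := pointwise_bound hlam hs0
    calc S * (Real.exp (lam * Real.log q) - 1 - lam * Real.log q)
        = (m:ℝ) * (Real.exp (-s) * (Real.exp (-(lam*s)) - 1 + lam*s)) := by
          rw [hSq, hlog, hqs]; ring
      _ ≤ (m:ℝ) * (lam^2 / (2*(1-|lam|))) := by
          exact mul_le_mul_of_nonneg_left hpb hm.le
      _ = (m:ℝ) * lam^2 / (2*(1-|lam|)) := by ring

/-- MGF bound for a group of independent Bernoulli variables weighted by the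
log of the mean parameter: if `X j ~ Ber(p j)` independently, `p̄ = (1/m) ∑ p j`,
and `Z = ∑ j (X j - p j) * log p̄` (with `0 * log 0 = 0` via `Real.log 0 = 0`),
then for `|λ| < 1`, `E[e^{λZ}] ≤ exp(m λ² / (2(1 - |λ|)))`. -/
theorem grouped_bernoulli_loglik_mgf_bound
    {Ω : Type*} [MeasurableSpace Ω] (μ : Measure Ω) [IsProbabilityMeasure μ]
    (m : ℕ) (X : Fin m → Ω → ℝ) (p : Fin m → ℝ)
    (hp : ∀ j, p j ∈ Set.Icc (0 : ℝ) 1)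
    (hmeas : ∀ j, Measurable (X j))
    (hval : ∀ j ω, X j ω = 0 ∨ X j ω = 1)
    (hdist : ∀ j, μ {ω | X j ω = 1} = ENNReal.ofReal (p j))
    (hindep : iIndepFun X μ)
    (lam : ℝ) (hlam : |lam| < 1) :
    ∫ ω, Real.exp (lam * ∑ j, (X j ω - p j) * Real.log ((∑ j', p j') / m)) ∂μ
      ≤ Real.exp ((m : ℝ) * lam ^ 2 / (2 * (1 - |lam|))) := by
  set ℓ : ℝ := Real.log ((∑ j', p j') / m) with hl
  set t : ℝ := lam * ℓ with ht
  set Y : Fin m → Ω → ℝ := fun j ω => (X j ω - p j) * ℓ with hY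
  have hmeasY : ∀ j, Measurable (Y j) := fun j => ((hmeas j).sub_const _).mul_const _
  have hindepY : iIndepFun Y μ :=
    hindep.comp (fun j x => (x - p j) * ℓ)
      (fun j => (measurable_id.sub_const _).mul_const _)
  have hLHS : ∫ ω, Real.exp (lam * ∑ j, (X j ω - p j) * ℓ) ∂μ
      = mgf (∑ j, Y j) μ lam := by
    unfold mgf
    apply integral_congr_ae
    filter_upwards with ω
    simp [Finset.sum_apply, hY]
  rw [hLHS, hindepY.mgf_sum hmeasY Finset.univ]
  have hfac : ∀ j, mgf (Y j) μ lam = Real.exp (-(t * p j)) * (1 + p j * (Real.exp t - 1)) := by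
    intro j
    have : mgf (Y j) μ lam = ∫ ω, Real.exp (t * (X j ω - p j)) ∂μ := by
      unfold mgf
      apply integral_congr_ae
      filter_upwards with ω
      congr 1
      rw [hY, ht]; ring
    rw [this]
    exact bernoulli_exp_integral μ (X j) (p j) t (hp j) (hmeas j) (hval j) (hdist j)
  have hstep : ∀ j, mgf (Y j) μ lam ≤ Real.exp (p j * (Real.exp t - 1) - t * p j) := by
    intro j
    rw [hfac j]
    have h1 : 1 + p j * (Real.exp t - 1) ≤ Real.exp (p j * (Real.exp t - 1)) := by
      have := Real.add_one_le_exp (p j * (Real.exp t - 1))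
      linarith
    calc Real.exp (-(t * p j)) * (1 + p j * (Real.exp t - 1))
        ≤ Real.exp (-(t * p j)) * Real.exp (p j * (Real.exp t - 1)) :=
          mul_le_mul_of_nonneg_left h1 (Real.exp_pos _).le
      _ = Real.exp (p j * (Real.exp t - 1) - t * p j) := by
          rw [← Real.exp_add]; ring_nf
  have hprodnn : ∀ j ∈ Finset.univ, (0:ℝ) ≤ mgf (Y j) μ lam := by
    intro j _
    rw [hfac j]
    have := (hp j).1; have := (hp j).2
    have : (0:ℝ) ≤ 1 + p j * (Real.exp t - 1) := by nlinarith [Real.exp_pos t]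
    positivity
  calc ∏ j, mgf (Y j) μ lam
      ≤ ∏ j, Real.exp (p j * (Real.exp t - 1) - t * p j) :=
        Finset.prod_le_prod hprodnn (fun j _ => hstep j)
    _ = Real.exp (∑ j, (p j * (Real.exp t - 1) - t * p j)) := by
        rw [Real.exp_sum]
    _ = Real.exp ((∑ j', p j') * (Real.exp t - 1 - t)) := by
        congr 1
        rw [Finset.sum_mul]
        apply Finset.sum_congr rfl
        intro j _; ring
    _ ≤ Real.exp ((m : ℝ) * lam ^ 2 / (2 * (1 - |lam|))) := by
        apply Real.exp_le_exp.mpr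
        have hS0 : (0:ℝ) ≤ ∑ j', p j' := Finset.sum_nonneg (fun j _ => (hp j).1)
        have hSm : (∑ j', p j') ≤ (m:ℝ) := by
          calc (∑ j', p j') ≤ ∑ _j' : Fin m, (1:ℝ) :=
              Finset.sum_le_sum (fun j _ => (hp j).2)
            _ = m := by simp
        have := final_ineq m (∑ j', p j') lam hS0 hSm hlam
        rw [ht, hl]
        linarith [this]
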